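/- arXiv:1811.11928 — 5 statements merged into one kernel-verified Lean document; each statement's English description precedes it below -/
import Mathlib

section
/- Let X be a countable (possibly finite) set and p ≥ 1/|X| (with the convention that the condition is Σ_{x∈X} p ≥ 1). Let ν be a probability distribution on X and ν̃ ≤ ν a subprobability distribution with weight 1 − ε satisfying ν̃(x) ≤ p for all x. Then there exists a probability distribution ν′ on X with ν′(x) ≥ ν̃(x) and ν′(x) ≤ p for all x, and TV(ν, ν′) ≤ ε. -/
/-- Given `p` with `|X| * p ≥ 1`, a probability distribution `ν`,
and a subprobability distribution `nt ≤ ν` of weight `1 - ε` with `nt ≤ p`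
pointwise, there is a probability distribution `ν'` dominating `nt`, bounded
by `p` pointwise, and within total-variation distance `ε` of `ν`. -/
theorem exists_dist_dominating_bounded {X : Type*} [Fintype X] (p ε : ℝ)
    (hp : 1 ≤ (Fintype.card X : ℝ) * p)
    (ν nt : X → ℝ)
    (hνnn : ∀ x, 0 ≤ ν x) (hν1 : ∑ x, ν x = 1)
    (hntnn : ∀ x, 0 ≤ nt x) (hle : ∀ x, nt x ≤ ν x)
    (hw : ∑ x, nt x = 1 - ε) (hntp : ∀ x, nt x ≤ p) :
    ∃ ν' : X → ℝ, (∀ x, 0 ≤ ν' x) ∧ (∑ x, ν' x = 1) ∧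
      (∀ x, nt x ≤ ν' x) ∧ (∀ x, ν' x ≤ p) ∧
      (1 / 2) * ∑ x, |ν x - ν' x| ≤ ε := by
  have hε0 : 0 ≤ ε := by
    have h : ∑ x, nt x ≤ ∑ x, ν x := Finset.sum_le_sum fun x _ => hle x
    rw [hw, hν1] at h; linarith
  set S := ∑ x, (p - nt x) with hS
  have hSval : S = (Fintype.card X : ℝ) * p - (1 - ε) := by
    rw [hS, Finset.sum_sub_distrib, hw, Finset.sum_const, Finset.card_univ,
      nsmul_eq_mul]
  have hSε : ε ≤ S := by linarith
  have hS0 : 0 ≤ S := le_trans hε0 hSε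
  have hterm : ∀ x, 0 ≤ ε * ((p - nt x) / S) := fun x =>
    mul_nonneg hε0 (div_nonneg (by linarith [hntp x]) hS0)
  have htermle : ∀ x, ε * ((p - nt x) / S) ≤ p - nt x := by
    intro x
    rcases eq_or_lt_of_le hS0 with h0 | hpos
    · simp [← h0]
      linarith [hntp x]
    · rw [mul_div_assoc']
      rw [div_le_iff₀ hpos]
      have := hntp x
      nlinarith
  have hsumdiv : ∑ x, ε * ((p - nt x) / S) = ε * (S / S) := by
    rw [← Finset.mul_sum, ← Finset.sum_div]
  have hsum2 : ∑ x, ε * ((p - nt x) / S) = ε := by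
    rw [hsumdiv]
    rcases eq_or_lt_of_le hS0 with h0 | hpos
    · have : ε = 0 := le_antisymm (h0 ▸ hSε) hε0
      simp [this]
    · rw [div_self hpos.ne']; ring
  refine ⟨fun x => nt x + ε * ((p - nt x) / S), fun x => ?_, ?_, fun x => ?_,
    fun x => ?_, ?_⟩
  · exact add_nonneg (hntnn x) (hterm x)
  · rw [Finset.sum_add_distrib, hw, hsum2]; ring
  · linarith [hterm x]
  · linarith [htermle x]
  · have habs : ∀ x, |ν x - (nt x + ε * ((p - nt x) / S))| ≤
        (ν x - nt x) + ε * ((p - nt x) / S) := by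
      intro x
      rw [abs_le]
      constructor <;> [linarith [hterm x, hle x]; linarith [hterm x, hle x]]
    calc (1/2) * ∑ x, |ν x - (nt x + ε * ((p - nt x) / S))|
        ≤ (1/2) * ∑ x, ((ν x - nt x) + ε * ((p - nt x) / S)) := by
          apply mul_le_mul_of_nonneg_left (Finset.sum_le_sum fun x _ => habs x)
          norm_num
      _ = ε := by
          rw [Finset.sum_add_distrib, Finset.sum_sub_distrib, hν1, hw, hsum2]
          ring
end

section
/- Let U be a level-ε E-uniform probability estimator for the model H (i.e., for all e and all μ satisfying H, P_μ(U(C,Z) ≥ μ(C|Z,e) | E=e) ≤ ε). Suppose the distribution μ of (C,Z,E) satisfies H, let p ≥ 1/|Rng(C)|, and let κ = μ(U ≤ p) > 0. Then the conditional distribution μ(CZE | U ≤ p) has (ε/κ)-smooth average ZE-conditional maximum probability at most p/κ; equivalently, the smooth conditional min-entropy satisfies H_min^{ε/κ}(C | ZE; U ≤ p) ≥ −log₂(p/κ). -/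
namespace ProbEst

variable {C Z E : Type*}

/-- Probability of `E = e` under `μ`. -/
noncomputable def margE (μ : C × Z × E → ℝ) (e : E) : ℝ :=
  ∑' q : C × Z, μ (q.1, q.2, e)

/-- Conditional distribution of `(C,Z)` given `E = e`. -/
noncomputable def condCZ (μ : C × Z × E → ℝ) (e : E) : C × Z → ℝ :=
  fun q => μ (q.1, q.2, e) / margE μ e

/-- Conditional probability `μ(c|z,e)`. -/
noncomputable def condC (μ : C × Z × E → ℝ) (c : C) (z : Z) (e : E) : ℝ :=
  μ (c, z, e) / ∑' c' : C, μ (c', z, e)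

/-- `μ` is a probability distribution. -/
def IsDist {X : Type*} (μ : X → ℝ) : Prop :=
  (∀ x, 0 ≤ μ x) ∧ Summable μ ∧ ∑' x, μ x = 1

/-- `μ` satisfies the model `H`: every `E`-conditional distribution of `(C,Z)`
lies in `H`. -/
def Satisfies (H : Set (C × Z → ℝ)) (μ : C × Z × E → ℝ) : Prop :=
  ∀ e : E, condCZ μ e ∈ H

/-- `U` is a level-`ε` `E`-uniform probability estimator for `H`: for every
distribution satisfying `H` and every `e`,
`P(U(C,Z) ≥ μ(C|Z,e) | E = e) ≥ 1 - ε`. -/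
def IsUPE (H : Set (C × Z → ℝ)) (ε : ℝ) (U : C × Z → ℝ) : Prop :=
  ∀ μ : C × Z × E → ℝ, IsDist μ → Satisfies H μ →
    ∀ e : E, 0 < margE μ e →
      1 - ε ≤ (∑' q : C × Z,
        if condC μ q.1 q.2 e ≤ U q then μ (q.1, q.2, e) else 0) / margE μ e

/-- Rotation equivalence `E × (C × Z) ≃ C × Z × E`. -/
def rot (C Z E : Type*) : E × (C × Z) ≃ C × Z × E :=
  (Equiv.prodComm E (C × Z)).trans (Equiv.prodAssoc C Z E)

lemma summable_rot {f : C × Z × E → ℝ} (hf : Summable f) :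
    Summable fun x : E × (C × Z) => f (x.2.1, x.2.2, x.1) :=
  (rot C Z E).summable_iff.mpr hf

lemma tsum_rot {f : C × Z × E → ℝ} (hf : Summable f) (hf0 : ∀ q, 0 ≤ f q) :
    ∑' q, f q = ∑' e : E, ∑' cz : C × Z, f (cz.1, cz.2, e) := by
  rw [← Equiv.tsum_eq (rot C Z E) f]
  exact Summable.tsum_prod' (summable_rot hf)
    (fun e => ((summable_prod_of_nonneg (fun _ => hf0 _)).mp (summable_rot hf)).1 e)

lemma summable_rot_marg {f : C × Z × E → ℝ} (hf : Summable f) (hf0 : ∀ q, 0 ≤ f q) :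
    Summable fun e : E => ∑' cz : C × Z, f (cz.1, cz.2, e) :=
  ((summable_prod_of_nonneg (fun _ => hf0 _)).mp (summable_rot hf)).2

lemma summable_rot_fiber {f : C × Z × E → ℝ} (hf : Summable f) (hf0 : ∀ q, 0 ≤ f q) (e : E) :
    Summable fun cz : C × Z => f (cz.1, cz.2, e) :=
  ((summable_prod_of_nonneg (fun _ => hf0 _)).mp (summable_rot hf)).1 e

lemma tsum_grp [Fintype C] {f : C × Z × E → ℝ} (hf : Summable f) (hf0 : ∀ q, 0 ≤ f q) :
    ∑' q, f q = ∑ c : C, ∑' r : Z × E, f (c, r) := by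
  rw [Summable.tsum_prod' hf (fun c => ((summable_prod_of_nonneg (fun _ => hf0 _)).mp hf).1 c)]
  exact tsum_fintype _

/-- If `U` is a level-`ε` `E`-uniform probability estimator for
`H`, `μ` satisfies `H`, `p ≥ 1/|Rng C|`, and `κ = μ(U ≤ p) > 0`, then the
distribution `μ` conditioned on the event `{U ≤ p}` has `(ε/κ)`-smooth average
`ZE`-conditional maximum probability at most `p/κ` (equivalently, smooth
conditional min-entropy at least `-log₂(p/κ)`). -/
theorem upe_smooth_max_prob [Fintype C] [Nonempty C] [Countable Z] [Countable E]
    (H : Set (C × Z → ℝ)) (ε p : ℝ) (hε : 0 < ε) (U : C × Z → ℝ)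
    (hU : IsUPE (E := E) H ε U)
    (μ : C × Z × E → ℝ) (hμ : IsDist μ) (hμH : Satisfies H μ)
    (hp : 1 / (Fintype.card C : ℝ) ≤ p)
    (κ : ℝ)
    (hκ : κ = ∑' q : C × Z × E, if U (q.1, q.2.1) ≤ p then μ q else 0)
    (hκpos : 0 < κ) :
    ∃ ν : C × Z × E → ℝ, (∀ q, 0 ≤ ν q) ∧ Summable ν ∧ (∑' q, ν q = 1) ∧
      (1 / 2) * (∑' q : C × Z × E,
          |ν q - (if U (q.1, q.2.1) ≤ p then μ q else 0) / κ|) ≤ ε / κ ∧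
      (∑' q : Z × E, ⨆ c : C, ν (c, q.1, q.2)) ≤ p / κ := by
  obtain ⟨hμ0, hμs, hμ1⟩ := hμ
  have hκne : κ ≠ 0 := ne_of_gt hκpos
  have hcC : (0 : ℝ) < (Fintype.card C : ℝ) := by exact_mod_cast Fintype.card_pos
  have hp0 : 0 < p := lt_of_lt_of_le (by positivity) hp
  have hcCp : (1 : ℝ) ≤ (Fintype.card C : ℝ) * p := by
    rw [div_le_iff₀ hcC] at hp
    linarith [hp]
  -- the marginal on Z × E
  set m : Z × E → ℝ := fun r => ∑ c : C, μ (c, r.1, r.2) with hm_def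
  have hm0 : ∀ r, 0 ≤ m r := fun r => Finset.sum_nonneg fun c _ => hμ0 _
  have hms : Summable m := by
    apply summable_sum
    intro c _
    exact ((summable_prod_of_nonneg (fun _ => hμ0 _)).mp hμs).1 c
  have hm1 : ∑' r, m r = 1 := by
    rw [hm_def]
    have h1 : ∑' r : Z × E, ∑ c : C, μ (c, r.1, r.2) = ∑ c : C, ∑' r : Z × E, μ (c, r.1, r.2) :=
      Summable.tsum_finsetSum fun c _ => ((summable_prod_of_nonneg (fun _ => hμ0 _)).mp hμs).1 c
    rw [h1, ← tsum_grp hμs hμ0, hμ1]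
  have hμ_le_m : ∀ q : C × Z × E, μ q ≤ m q.2 := by
    intro q
    have := Finset.single_le_sum (f := fun c => μ (c, q.2.1, q.2.2))
      (fun c _ => hμ0 _) (Finset.mem_univ q.1)
    simpa using this
  -- indicator functions
  set A : C × Z × E → ℝ := fun q => if U (q.1, q.2.1) ≤ p then μ q else 0 with hA_def
  set G : C × Z × E → ℝ := fun q =>
    if U (q.1, q.2.1) ≤ p ∧ condC μ q.1 q.2.1 q.2.2 ≤ U (q.1, q.2.1) then μ q else 0 with hG_def
  set Bad : C × Z × E → ℝ := fun q =>
    if condC μ q.1 q.2.1 q.2.2 ≤ U (q.1, q.2.1) then 0 else μ q with hBad_def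
  have hA0 : ∀ q, 0 ≤ A q := by
    intro q; simp only [hA_def]; split; exacts [hμ0 _, le_rfl]
  have hG0 : ∀ q, 0 ≤ G q := by
    intro q; simp only [hG_def]; split; exacts [hμ0 _, le_rfl]
  have hBad0 : ∀ q, 0 ≤ Bad q := by
    intro q; simp only [hBad_def]; split; exacts [le_rfl, hμ0 _]
  have hAμ : ∀ q, A q ≤ μ q := by
    intro q; simp only [hA_def]; split; exacts [le_rfl, hμ0 _]
  have hBadμ : ∀ q, Bad q ≤ μ q := by
    intro q; simp only [hBad_def]; split; exacts [hμ0 _, le_rfl]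
  have hGA : ∀ q, G q ≤ A q := by
    intro q
    by_cases h1 : U (q.1, q.2.1) ≤ p <;>
      by_cases h2 : condC μ q.1 q.2.1 q.2.2 ≤ U (q.1, q.2.1) <;>
      simp [hG_def, hA_def, h1, h2, hμ0 q]
  have hAG_le_Bad : ∀ q, A q - G q ≤ Bad q := by
    intro q
    by_cases h1 : U (q.1, q.2.1) ≤ p <;>
      by_cases h2 : condC μ q.1 q.2.1 q.2.2 ≤ U (q.1, q.2.1) <;>
      simp [hG_def, hA_def, hBad_def, h1, h2, hμ0 q]
  have hAs : Summable A := Summable.of_nonneg_of_le hA0 hAμ hμs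
  have hGs : Summable G := Summable.of_nonneg_of_le hG0 (fun q => le_trans (hGA q) (hAμ q)) hμs
  have hBads : Summable Bad := Summable.of_nonneg_of_le hBad0 hBadμ hμs
  have hκ1 : κ ≤ 1 := by
    rw [hκ, ← hμ1]
    exact Summable.tsum_le_tsum hAμ hAs hμs
  -- pointwise bound `G ≤ p·m`
  have hGp : ∀ q, G q ≤ p * m q.2 := by
    intro q
    have hpm : 0 ≤ p * m q.2 := mul_nonneg hp0.le (hm0 _)
    simp only [hG_def]
    split
    case isTrue h =>
      have hM : (∑' c' : C, μ (c', q.2.1, q.2.2)) = m q.2 := by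
        rw [tsum_fintype]
      rcases eq_or_lt_of_le (hm0 q.2) with hM0 | hM0
      · have h1 := hμ_le_m q
        nlinarith [hμ0 q, hp0]
      · have h2 := h.2
        rw [condC, hM, div_le_iff₀ hM0] at h2
        have h1 := h.1
        have heq : μ q = μ (q.1, q.2.1, q.2.2) := rfl
        nlinarith [hm0 q.2]
    case isFalse h => exact hpm
  -- the bad mass is at most ε
  have hmargs : Summable fun e : E => margE μ e := by
    have := summable_rot_marg hμs hμ0
    simpa [margE] using this
  have hmarg1 : ∑' e : E, margE μ e = 1 := by
    have h : ∑' e : E, ∑' cz : C × Z, μ (cz.1, cz.2, e) = 1 := by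
      rw [← tsum_rot hμs hμ0, hμ1]
    simpa [margE] using h
  have hBadε : ∑' q, Bad q ≤ ε := by
    have hfib : ∀ e, Summable fun cz : C × Z => μ (cz.1, cz.2, e) := summable_rot_fiber hμs hμ0
    have hBfib : ∀ e, Summable fun cz : C × Z => Bad (cz.1, cz.2, e) :=
      summable_rot_fiber hBads hBad0
    have key : ∀ e : E, (∑' cz : C × Z, Bad (cz.1, cz.2, e)) ≤ ε * margE μ e := by
      intro e
      have hMe0 : 0 ≤ margE μ e := tsum_nonneg fun cz => hμ0 _
      have hgs : Summable fun cz : C × Z =>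
          (if condC μ cz.1 cz.2 e ≤ U cz then μ (cz.1, cz.2, e) else 0) :=
        Summable.of_nonneg_of_le (fun cz => by split; exacts [hμ0 _, le_rfl])
          (fun cz => by split; exacts [le_rfl, hμ0 _]) (hfib e)
      have hsplit : (∑' cz : C × Z,
          (if condC μ cz.1 cz.2 e ≤ U cz then μ (cz.1, cz.2, e) else 0)) +
          (∑' cz : C × Z, Bad (cz.1, cz.2, e)) = margE μ e := by
        rw [← Summable.tsum_add hgs (hBfib e)]
        apply tsum_congr
        intro cz
        by_cases h : condC μ cz.1 cz.2 e ≤ U cz <;> simp [hBad_def, h]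
      by_cases hMe : 0 < margE μ e
      · have h1 := hU μ ⟨hμ0, hμs, hμ1⟩ hμH e hMe
        rw [le_div_iff₀ hMe] at h1
        nlinarith [hsplit]
      · have hMe0' : margE μ e = 0 := le_antisymm (not_lt.mp hMe) hMe0
        have hble : (∑' cz : C × Z, Bad (cz.1, cz.2, e)) ≤ margE μ e :=
          Summable.tsum_le_tsum (fun cz => hBadμ (cz.1, cz.2, e)) (hBfib e) (hfib e)
        rw [hMe0'] at hble ⊢
        simpa using hble
    calc ∑' q, Bad q = ∑' e, ∑' cz : C × Z, Bad (cz.1, cz.2, e) := tsum_rot hBads hBad0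
      _ ≤ ∑' e, ε * margE μ e :=
          Summable.tsum_le_tsum key (summable_rot_marg hBads hBad0) (hmargs.mul_left ε)
      _ = ε * ∑' e, margE μ e := tsum_mul_left
      _ = ε := by rw [hmarg1, mul_one]
  -- sums and coefficients
  set SG := ∑' q, G q with hSG_def
  have hSG0 : 0 ≤ SG := tsum_nonneg hG0
  have hSGκ : SG ≤ κ := hκ ▸ Summable.tsum_le_tsum hGA hGs hAs
  have hTsum : ∑' q, (A q - G q) = κ - SG := by rw [Summable.tsum_sub hAs hGs, ← hκ]
  have hT : κ - SG ≤ ε := by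
    have h := Summable.tsum_le_tsum hAG_le_Bad (hAs.sub hGs) hBads
    rw [hTsum] at h
    linarith [hBadε]
  have hT0 : 0 ≤ κ - SG := by linarith
  set K := (Fintype.card C : ℝ) * p - SG with hK_def
  have hKT : κ - SG ≤ K := by
    simp only [hK_def]
    linarith [hκ1, hcCp]
  have hK0 : 0 ≤ K := le_trans hT0 hKT
  set l := (κ - SG) / K with hl_def
  have hl0 : 0 ≤ l := div_nonneg hT0 hK0
  have hl1 : l ≤ 1 := by
    rcases eq_or_lt_of_le hK0 with h | h
    · rw [hl_def, ← h, div_zero]; norm_num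
    · exact (div_le_one h).mpr hKT
  have hlK : l * K = κ - SG := by
    rcases eq_or_lt_of_le hK0 with h | h
    · rw [← h, mul_zero]
      rw [← h] at hKT
      linarith
    · rw [hl_def, div_mul_cancel₀ _ (ne_of_gt h)]
  -- summability of the uniform part
  have hPm : Summable fun q : C × Z × E => p * m q.2 := by
    apply (summable_prod_of_nonneg
      (f := fun q : C × (Z × E) => p * m q.2) (fun q => mul_nonneg hp0.le (hm0 _))).mpr
    exact ⟨fun c => hms.mul_left p, Summable.of_finite⟩
  have hPm1 : ∑' q : C × Z × E, p * m q.2 = (Fintype.card C : ℝ) * p := by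
    rw [tsum_grp hPm (fun q => mul_nonneg hp0.le (hm0 _))]
    have h1 : ∀ c : C, ∑' r : Z × E, p * m r = p := by
      intro c
      rw [tsum_mul_left, hm1, mul_one]
    calc ∑ c : C, ∑' r : Z × E, p * m (c, r).2 = ∑ c : C, p := by
          exact Finset.sum_congr rfl fun c _ => h1 c
      _ = (Fintype.card C : ℝ) * p := by
          rw [Finset.sum_const, Finset.card_univ, nsmul_eq_mul]
  -- the candidate distribution
  set ν : C × Z × E → ℝ := fun q => (1 - l) * (G q / κ) + l * (p * m q.2 / κ) with hν_def
  have hν0 : ∀ q, 0 ≤ ν q := by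
    intro q
    apply add_nonneg
    · exact mul_nonneg (by linarith) (div_nonneg (hG0 q) hκpos.le)
    · exact mul_nonneg hl0 (div_nonneg (mul_nonneg hp0.le (hm0 _)) hκpos.le)
  have hνs : Summable ν :=
    (((hGs.div_const κ).mul_left (1 - l)).add ((hPm.div_const κ).mul_left l))
  have hν1 : ∑' q, ν q = 1 := by
    have h1 : ∑' q, ν q = (1 - l) * (SG / κ) + l * ((Fintype.card C : ℝ) * p / κ) := by
      rw [hν_def, Summable.tsum_add ((hGs.div_const κ).mul_left (1 - l)) ((hPm.div_const κ).mul_left l),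
        tsum_mul_left, tsum_mul_left, tsum_div_const, tsum_div_const, hPm1, hSG_def]
    rw [h1]
    have h2 : l * K = κ - SG := hlK
    rw [hK_def] at h2
    field_simp
    linear_combination h2
  refine ⟨ν, hν0, hνs, hν1, ?_, ?_⟩
  · -- TV bound
    have hpt : ∀ q, |ν q - A q / κ| ≤ (A q - G q) / κ + l * ((p * m q.2 - G q) / κ) := by
      intro q
      have h1 : ν q - A q / κ = (G q - A q) / κ + l * ((p * m q.2 - G q) / κ) := by
        rw [hν_def]; ring
      rw [h1]
      have h2 : 0 ≤ l * ((p * m q.2 - G q) / κ) :=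
        mul_nonneg hl0 (div_nonneg (by linarith [hGp q]) hκpos.le)
      have h3 : (G q - A q) / κ ≤ 0 :=
        div_nonpos_of_nonpos_of_nonneg (by linarith [hGA q]) hκpos.le
      calc |(G q - A q) / κ + l * ((p * m q.2 - G q) / κ)|
          ≤ |(G q - A q) / κ| + |l * ((p * m q.2 - G q) / κ)| := abs_add_le _ _
        _ = (A q - G q) / κ + l * ((p * m q.2 - G q) / κ) := by
            rw [abs_of_nonpos h3, abs_of_nonneg h2]
            ring
    have hLs : Summable fun q => |ν q - A q / κ| := ((hνs.sub (hAs.div_const κ)).abs)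
    have hRs1 : Summable fun q => (A q - G q) / κ := (hAs.sub hGs).div_const κ
    have hRs2 : Summable fun q => l * ((p * m q.2 - G q) / κ) :=
      ((hPm.sub hGs).div_const κ).mul_left l
    have hsum : ∑' q, ((A q - G q) / κ + l * ((p * m q.2 - G q) / κ)) =
        (κ - SG) / κ + l * (K / κ) := by
      rw [Summable.tsum_add hRs1 hRs2, tsum_mul_left, tsum_div_const, tsum_div_const,
        hTsum, Summable.tsum_sub hPm hGs, hPm1, ← hSG_def, ← hK_def]
    have hfinal : ∑' q, |ν q - A q / κ| ≤ (κ - SG) / κ + l * (K / κ) := by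
      rw [← hsum]
      exact Summable.tsum_le_tsum hpt hLs (hRs1.add hRs2)
    have h4 : l * (K / κ) = (κ - SG) / κ := by
      rw [mul_div_assoc']
      rw [hlK]
    rw [h4] at hfinal
    have h5 : (κ - SG) / κ ≤ ε / κ := by gcongr
    linarith
  · -- max-probability bound
    have hνle : ∀ (c : C) (r : Z × E), ν (c, r.1, r.2) ≤ p * m r / κ := by
      intro c r
      have h1 : G (c, r.1, r.2) ≤ p * m r := hGp (c, r.1, r.2)
      have h2 : (1 - l) * (G (c, r.1, r.2) / κ) ≤ (1 - l) * (p * m r / κ) := by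
        have hdiv : G (c, r.1, r.2) / κ ≤ p * m r / κ := by gcongr
        exact mul_le_mul_of_nonneg_left hdiv (by linarith)
      have h3 : ν (c, r.1, r.2) = (1 - l) * (G (c, r.1, r.2) / κ) + l * (p * m r / κ) := rfl
      rw [h3]
      nlinarith [hl0, hl1]
    have hsup_le : ∀ r : Z × E, (⨆ c : C, ν (c, r.1, r.2)) ≤ p * m r / κ := fun r =>
      ciSup_le fun c => hνle c r
    have hsup0 : ∀ r : Z × E, 0 ≤ ⨆ c : C, ν (c, r.1, r.2) := by
      intro r
      have hbd : BddAbove (Set.range fun c : C => ν (c, r.1, r.2)) :=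
        Set.Finite.bddAbove (Set.finite_range _)
      exact le_ciSup_of_le hbd (Classical.arbitrary C) (hν0 _)
    have hsups : Summable fun r : Z × E => ⨆ c : C, ν (c, r.1, r.2) :=
      Summable.of_nonneg_of_le hsup0 hsup_le ((hms.mul_left p).div_const κ)
    calc ∑' r : Z × E, ⨆ c : C, ν (c, r.1, r.2)
        ≤ ∑' r : Z × E, p * m r / κ :=
          Summable.tsum_le_tsum hsup_le hsups ((hms.mul_left p).div_const κ)
      _ = p / κ := by rw [tsum_div_const, tsum_mul_left, hm1, mul_one]

end ProbEst
end

section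
/- For x₁, x₂ ≥ 0, y₁, y₂ > 0, and β > 0, the function f(λ) = (λx₁ + (1−λ)x₂)^{1+β} (λy₁ + (1−λ)y₂)^{−β} is convex on [0,1]. -/
/-!
The function is the restriction to the segment from `(x₂, y₂)` to `(x₁, y₁)` of
`(a, c) ↦ a ^ (1 + β) * c ^ (-β) = c * (a / c) ^ (1 + β)`, the perspective of the convex
function `x ↦ x ^ (1 + β)`. Perspectives of convex functions are jointly convex, and convexity
survives composition with an affine map.
-/

open Set

theorem ConvexOn.perspective {s : Set ℝ} {φ : ℝ → ℝ} (hφ : ConvexOn ℝ s φ) :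
    ConvexOn ℝ {z : ℝ × ℝ | 0 < z.2 ∧ z.1 / z.2 ∈ s} (fun z => z.2 * φ (z.1 / z.2)) := by
  -- The ratio of a combination of points is a combination of their ratios, with weights
  -- proportional to `t * c` and `u * d`.
  have key : ∀ ⦃a b c d t u : ℝ⦄, 0 < c → 0 < d → 0 ≤ t → 0 ≤ u → t + u = 1 →
      0 < t * c + u * d ∧ 0 ≤ t * c / (t * c + u * d) ∧ 0 ≤ u * d / (t * c + u * d) ∧
      t * c / (t * c + u * d) + u * d / (t * c + u * d) = 1 ∧
      (t * a + u * b) / (t * c + u * d) =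
        t * c / (t * c + u * d) * (a / c) + u * d / (t * c + u * d) * (b / d) := by
    intro a b c d t u hc hd ht hu htu
    have hw : 0 < t * c + u * d := convex_Ioi (0 : ℝ) hc hd ht hu htu
    refine ⟨hw, by positivity, by positivity, ?_, ?_⟩ <;> field_simp
  refine ⟨fun x hx y hy t u ht hu htu => ?_, fun x hx y hy t u ht hu htu => ?_⟩
  · obtain ⟨hw, hp, hq, hpq, harg⟩ := key (a := x.1) (b := y.1) hx.1 hy.1 ht hu htu
    simp only [mem_ofPred_eq, Prod.fst_add, Prod.snd_add, Prod.smul_fst, Prod.smul_snd,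
      smul_eq_mul, harg]
    exact ⟨hw, hφ.1 hx.2 hy.2 hp hq hpq⟩
  · obtain ⟨hw, hp, hq, hpq, harg⟩ := key (a := x.1) (b := y.1) hx.1 hy.1 ht hu htu
    simp only [Prod.fst_add, Prod.snd_add, Prod.smul_fst, Prod.smul_snd, smul_eq_mul, harg]
    calc (t * x.2 + u * y.2) * φ (t * x.2 / (t * x.2 + u * y.2) * (x.1 / x.2) +
          u * y.2 / (t * x.2 + u * y.2) * (y.1 / y.2))
        ≤ (t * x.2 + u * y.2) * (t * x.2 / (t * x.2 + u * y.2) * φ (x.1 / x.2) +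
          u * y.2 / (t * x.2 + u * y.2) * φ (y.1 / y.2)) :=
          mul_le_mul_of_nonneg_left (hφ.2 hx.2 hy.2 hp hq hpq) hw.le
      _ = t * (x.2 * φ (x.1 / x.2)) + u * (y.2 * φ (y.1 / y.2)) := by field_simp

theorem convexOn_rpow_mul_rpow_neg {β : ℝ} (hβ : 0 ≤ β) :
    ConvexOn ℝ (Ici 0 ×ˢ Ioi 0) (fun z : ℝ × ℝ => z.1 ^ (1 + β) * z.2 ^ (-β)) := by
  have hdom : {z : ℝ × ℝ | 0 < z.2 ∧ z.1 / z.2 ∈ Ici 0} = Ici 0 ×ˢ Ioi 0 := by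
    ext ⟨a, c⟩
    simp only [mem_ofPred_eq, mem_prod, mem_Ici, mem_Ioi]
    constructor
    · rintro ⟨hc, h⟩
      exact ⟨by simpa [le_div_iff₀ hc] using h, hc⟩
    · rintro ⟨ha, hc⟩
      exact ⟨hc, div_nonneg ha hc.le⟩
  have hp : (1 : ℝ) ≤ 1 + β := by linarith
  refine hdom ▸ (convexOn_rpow hp).perspective |>.congr
    fun z ⟨(hz₁ : 0 ≤ z.1), (hz₂ : 0 < z.2)⟩ => ?_
  dsimp only
  rw [Real.div_rpow hz₁ hz₂.le, Real.rpow_neg hz₂.le, Real.rpow_add hz₂, Real.rpow_one]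
  field_simp

/-- For `x₁, x₂ ≥ 0`, `y₁, y₂ > 0` and `β > 0`, the function
`λ ↦ (λx₁+(1−λ)x₂)^{1+β} (λy₁+(1−λ)y₂)^{−β}` is convex on `[0,1]`. -/
theorem pef_ratio_convex (x₁ x₂ y₁ y₂ β : ℝ)
    (hx₁ : 0 ≤ x₁) (hx₂ : 0 ≤ x₂) (hy₁ : 0 < y₁) (hy₂ : 0 < y₂) (hβ : 0 < β) :
    ConvexOn ℝ (Set.Icc (0 : ℝ) 1)
      (fun l : ℝ =>
        (l * x₁ + (1 - l) * x₂) ^ ((1 : ℝ) + β) * (l * y₁ + (1 - l) * y₂) ^ (-β)) := by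
  have hmaps : MapsTo (AffineMap.lineMap (x₂, y₂) (x₁, y₁)) (Icc (0 : ℝ) 1) (Ici 0 ×ˢ Ioi 0) :=
    ((convex_Ici 0).prod (convex_Ioi 0)).mapsTo_lineMap ⟨hx₂, hy₂⟩ ⟨hx₁, hy₁⟩
  refine ((convexOn_rpow_mul_rpow_neg hβ.le).comp_affineMap _).subset hmaps (convex_Icc 0 1)
    |>.congr fun l _ => ?_
  simp [AffineMap.lineMap_apply_module, add_comm]
end

section
/- In the CHSH Bell-test configuration with trial model C the set of non-signaling distributions with fixed input distribution P(XY) (all P(x,y) > 0), for any ν ∈ C with Ê = E_ν(I_CHSH) > 2, the worst-case conditional entropy g₀ = min{ Σ_e ω_e H_{σ_e}(AB|XY) : σ_e ∈ C, ω_e ≥ 0, Σ_e ω_e = 1, Σ_e ω_e σ_e = ν } equals (Ê − 2)/2. -/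
-- analytic lemmas
lemma nml_le_one {x : ℝ} (hx : 0 ≤ x) : Real.negMulLog x ≤ 1 := by
  rcases eq_or_lt_of_le hx with h | h
  · simp [← h]
  · have h1 : Real.log x⁻¹ ≤ x⁻¹ - 1 := Real.log_le_sub_one_of_pos (by positivity)
    rw [Real.log_inv] at h1
    have := mul_le_mul_of_nonneg_left h1 h.le
    have hinv : x * x⁻¹ = 1 := mul_inv_cancel₀ h.ne'
    rw [Real.negMulLog]
    nlinarith [h.le]

lemma nml_ge_left {v : ℝ} (h0 : 0 ≤ v) (h1 : v ≤ 1/2) :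
    v * Real.log 2 ≤ Real.negMulLog v := by
  rcases eq_or_lt_of_le h0 with h | h
  · simp [← h]
  · have h2 : Real.log v ≤ Real.log (1/2) := Real.log_le_log h h1
    rw [show (1:ℝ)/2 = 2⁻¹ by norm_num, Real.log_inv] at h2
    rw [Real.negMulLog]
    nlinarith

lemma nml_ge_right {w : ℝ} (h0 : 1/2 ≤ w) (h1 : w ≤ 1) :
    (1 - w) * Real.log 2 ≤ Real.negMulLog w := by
  have hc := Real.concaveOn_negMulLog.2 (Set.mem_Ici.mpr (by norm_num : (0:ℝ) ≤ 1/2))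
    (Set.mem_Ici.mpr (by norm_num : (0:ℝ) ≤ 1))
    (by linarith : (0:ℝ) ≤ 2*(1-w)) (by linarith : (0:ℝ) ≤ 2*w-1) (by ring)
  have e1 : Real.negMulLog (1/2) = (1/2) * Real.log 2 := by
    rw [Real.negMulLog, show (1:ℝ)/2 = 2⁻¹ by norm_num, Real.log_inv]; ring
  have e2 : Real.negMulLog 1 = 0 := Real.negMulLog_one
  have e3 : (2*(1-w)) • ((1:ℝ)/2) + (2*w-1) • (1:ℝ) = w := by
    simp [smul_eq_mul]; ring
  rw [e3] at hc
  calc (1-w) * Real.log 2 = (2*(1-w)) • Real.negMulLog (1/2) + (2*w-1) • Real.negMulLog 1 := by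
        rw [e1, e2]; simp [smul_eq_mul]; ring
    _ ≤ _ := hc

lemma nml_key1 {t u : ℝ} (ht : 0 ≤ t) (htu : t ≤ u) (h1 : u + t ≤ 1) :
    t * Real.log 2 ≤ Real.negMulLog u := by
  rcases le_or_gt u (1/2) with h | h
  · calc t * Real.log 2 ≤ u * Real.log 2 :=
        mul_le_mul_of_nonneg_right htu (Real.log_nonneg (by norm_num))
      _ ≤ _ := nml_ge_left (le_trans ht htu) h
  · calc t * Real.log 2 ≤ (1 - u) * Real.log 2 :=
        mul_le_mul_of_nonneg_right (by linarith) (Real.log_nonneg (by norm_num))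
      _ ≤ _ := nml_ge_right h.le (by linarith)

lemma nml_key2 {t u v : ℝ} (ht : 0 ≤ t) (htu : t ≤ u) (htv : t ≤ v) (h1 : u + v ≤ 1) :
    2 * t * Real.log 2 ≤ Real.negMulLog u + Real.negMulLog v := by
  have h2 := nml_key1 ht htu (by linarith)
  have h3 := nml_key1 ht htv (by linarith)
  linarith

lemma sum_expand (f : Fin 2 × Fin 2 × Fin 2 × Fin 2 → ℝ) :
    ∑ d, f d = f (0,0,0,0) + f (0,0,0,1) + f (0,0,1,0) + f (0,0,1,1)
      + f (0,1,0,0) + f (0,1,0,1) + f (0,1,1,0) + f (0,1,1,1)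
      + f (1,0,0,0) + f (1,0,0,1) + f (1,0,1,0) + f (1,0,1,1)
      + f (1,1,0,0) + f (1,1,0,1) + f (1,1,1,0) + f (1,1,1,1) := by
  simp [Fintype.sum_prod_type, Fin.sum_univ_two]; ring




lemma sum_expand2 (f : Fin 2 × Fin 2 → ℝ) :
    ∑ q, f q = f (0,0) + f (0,1) + f (1,0) + f (1,1) := by
  simp [Fintype.sum_prod_type, Fin.sum_univ_two]; ring

namespace CHSH17

/-- The set of non-signaling distributions of `(A,B,X,Y)` with fixed input
distribution `PXY`. -/
def NS (PXY : Fin 2 × Fin 2 → ℝ) : Set (Fin 2 × Fin 2 × Fin 2 × Fin 2 → ℝ) :=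
  {ν | (∀ d, 0 ≤ ν d) ∧
    (∀ x y : Fin 2, ∑ a : Fin 2, ∑ b : Fin 2, ν (a, b, x, y) = PXY (x, y)) ∧
    (∀ a x y y' : Fin 2, ∑ b : Fin 2, ν (a, b, x, y) / PXY (x, y) =
      ∑ b : Fin 2, ν (a, b, x, y') / PXY (x, y')) ∧
    (∀ b x x' y : Fin 2, ∑ a : Fin 2, ν (a, b, x, y) / PXY (x, y) =
      ∑ a : Fin 2, ν (a, b, x', y) / PXY (x', y))}

/-- The CHSH Bell function `I_CHSH(a,b,x,y) = (1−2xy)(−1)^{a+b}/P(x,y)`. -/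
noncomputable def chsh (PXY : Fin 2 × Fin 2 → ℝ)
    (d : Fin 2 × Fin 2 × Fin 2 × Fin 2) : ℝ :=
  (1 - 2 * ((d.2.2.1 : ℕ) : ℝ) * ((d.2.2.2 : ℕ) : ℝ)) *
    (-1 : ℝ) ^ ((d.1 : ℕ) + (d.2.1 : ℕ)) / PXY d.2.2

/-- The Shannon conditional entropy `H_σ(AB|XY)` (base 2) for a distribution
with input marginal `PXY`. -/
noncomputable def condEnt (PXY : Fin 2 × Fin 2 → ℝ)
    (σ : Fin 2 × Fin 2 × Fin 2 × Fin 2 → ℝ) : ℝ :=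
  -∑ d : Fin 2 × Fin 2 × Fin 2 × Fin 2, σ d * Real.logb 2 (σ d / PXY d.2.2)

lemma condEnt_eq (PXY : Fin 2 × Fin 2 → ℝ) (hPXY : ∀ q, 0 < PXY q)
    (σ : Fin 2 × Fin 2 × Fin 2 × Fin 2 → ℝ) :
    condEnt PXY σ =
      (∑ d : Fin 2 × Fin 2 × Fin 2 × Fin 2,
        PXY d.2.2 * Real.negMulLog (σ d / PXY d.2.2)) / Real.log 2 := by
  rw [condEnt, ← Finset.sum_neg_distrib, Finset.sum_div]
  apply Finset.sum_congr rfl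
  intro d _
  have hP := (hPXY d.2.2).ne'
  rw [Real.logb, Real.negMulLog]
  field_simp

noncomputable def pc (PXY : Fin 2 × Fin 2 → ℝ) (σ : Fin 2 × Fin 2 × Fin 2 × Fin 2 → ℝ)
    (a b x y : Fin 2) : ℝ := σ (a,b,x,y) / PXY (x,y)

set_option maxHeartbeats 2000000 in
lemma NS_bounds (PXY : Fin 2 × Fin 2 → ℝ) (hPXY : ∀ q, 0 < PXY q)
    (hPXY1 : ∑ q : Fin 2 × Fin 2, PXY q = 1)
    (σ : Fin 2 × Fin 2 × Fin 2 × Fin 2 → ℝ) (hσ : σ ∈ NS PXY) :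
    0 ≤ condEnt PXY σ ∧ condEnt PXY σ ≤ 8 ∧
      |∑ d, σ d * chsh PXY d| ≤ 4 ∧
      (∑ d, σ d * chsh PXY d - 2) / 2 ≤ condEnt PXY σ := by
  obtain ⟨h0, hsum, hA, hB⟩ := hσ
  have hlog2 : (0:ℝ) < Real.log 2 := Real.log_pos one_lt_two
  have hlog2' : (1:ℝ)/2 ≤ Real.log 2 := by
    have := Real.log_two_gt_d9; linarith
  have hp0 : ∀ a b x y : Fin 2, 0 ≤ pc PXY σ a b x y := fun a b x y =>
    div_nonneg (h0 _) (hPXY _).le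
  have hps : ∀ x y : Fin 2,
      pc PXY σ 0 0 x y + pc PXY σ 0 1 x y + pc PXY σ 1 0 x y + pc PXY σ 1 1 x y = 1 := by
    intro x y
    have h := hsum x y
    simp only [Fin.sum_univ_two] at h
    have hP := (hPXY (x,y)).ne'
    simp only [pc]
    field_simp
    linarith
  have hAy : ∀ a x : Fin 2,
      pc PXY σ a 0 x 0 + pc PXY σ a 1 x 0 = pc PXY σ a 0 x 1 + pc PXY σ a 1 x 1 := by
    intro a x
    have h := hA a x 0 1
    simp only [Fin.sum_univ_two] at h
    simp only [pc]
    exact h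
  have hBx : ∀ b y : Fin 2,
      pc PXY σ 0 b 0 y + pc PXY σ 1 b 0 y = pc PXY σ 0 b 1 y + pc PXY σ 1 b 1 y := by
    intro b y
    have h := hB b 0 1 y
    simp only [Fin.sum_univ_two] at h
    simp only [pc]
    exact h
  have n0000 : 0 ≤ pc PXY σ 0 0 0 0 := hp0 0 0 0 0
  have n0001 : 0 ≤ pc PXY σ 0 0 0 1 := hp0 0 0 0 1
  have n0010 : 0 ≤ pc PXY σ 0 0 1 0 := hp0 0 0 1 0
  have n0011 : 0 ≤ pc PXY σ 0 0 1 1 := hp0 0 0 1 1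
  have n0100 : 0 ≤ pc PXY σ 0 1 0 0 := hp0 0 1 0 0
  have n0101 : 0 ≤ pc PXY σ 0 1 0 1 := hp0 0 1 0 1
  have n0110 : 0 ≤ pc PXY σ 0 1 1 0 := hp0 0 1 1 0
  have n0111 : 0 ≤ pc PXY σ 0 1 1 1 := hp0 0 1 1 1
  have n1000 : 0 ≤ pc PXY σ 1 0 0 0 := hp0 1 0 0 0
  have n1001 : 0 ≤ pc PXY σ 1 0 0 1 := hp0 1 0 0 1
  have n1010 : 0 ≤ pc PXY σ 1 0 1 0 := hp0 1 0 1 0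
  have n1011 : 0 ≤ pc PXY σ 1 0 1 1 := hp0 1 0 1 1
  have n1100 : 0 ≤ pc PXY σ 1 1 0 0 := hp0 1 1 0 0
  have n1101 : 0 ≤ pc PXY σ 1 1 0 1 := hp0 1 1 0 1
  have n1110 : 0 ≤ pc PXY σ 1 1 1 0 := hp0 1 1 1 0
  have n1111 : 0 ≤ pc PXY σ 1 1 1 1 := hp0 1 1 1 1
  have s00 := hps 0 0
  have s01 := hps 0 1
  have s10 := hps 1 0
  have s11 := hps 1 1
  have ay00 := hAy 0 0
  have ay01 := hAy 0 1
  have ay10 := hAy 1 0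
  have ay11 := hAy 1 1
  have bx00 := hBx 0 0
  have bx01 := hBx 0 1
  have bx10 := hBx 1 0
  have bx11 := hBx 1 1
  set E := ∑ d, σ d * chsh PXY d with hEdef
  have hE : E = pc PXY σ 0 0 0 0 + pc PXY σ 0 0 0 1 + pc PXY σ 0 0 1 0 - pc PXY σ 0 0 1 1 - pc PXY σ 0 1 0 0 - pc PXY σ 0 1 0 1 - pc PXY σ 0 1 1 0 + pc PXY σ 0 1 1 1 - pc PXY σ 1 0 0 0 - pc PXY σ 1 0 0 1 - pc PXY σ 1 0 1 0 + pc PXY σ 1 0 1 1 + pc PXY σ 1 1 0 0 + pc PXY σ 1 1 0 1 + pc PXY σ 1 1 1 0 - pc PXY σ 1 1 1 1 := by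
    rw [hEdef, sum_expand]
    simp only [chsh, pc, Fin.val_zero, Fin.val_one]
    norm_num
    ring
  have hfour : PXY (0,0) + PXY (0,1) + PXY (1,0) + PXY (1,1) = 1 := by
    rw [sum_expand2] at hPXY1; exact hPXY1
  have hCE : condEnt PXY σ = (PXY (0,0) * (Real.negMulLog (pc PXY σ 0 0 0 0) + Real.negMulLog (pc PXY σ 0 1 0 0) + Real.negMulLog (pc PXY σ 1 0 0 0) + Real.negMulLog (pc PXY σ 1 1 0 0)) + PXY (0,1) * (Real.negMulLog (pc PXY σ 0 0 0 1) + Real.negMulLog (pc PXY σ 0 1 0 1) + Real.negMulLog (pc PXY σ 1 0 0 1) + Real.negMulLog (pc PXY σ 1 1 0 1)) + PXY (1,0) * (Real.negMulLog (pc PXY σ 0 0 1 0) + Real.negMulLog (pc PXY σ 0 1 1 0) + Real.negMulLog (pc PXY σ 1 0 1 0) + Real.negMulLog (pc PXY σ 1 1 1 0)) + PXY (1,1) * (Real.negMulLog (pc PXY σ 0 0 1 1) + Real.negMulLog (pc PXY σ 0 1 1 1) + Real.negMulLog (pc PXY σ 1 0 1 1) + Real.negMulLog (pc PXY σ 1 1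 1 1))) / Real.log 2 := by
    rw [condEnt_eq PXY hPXY σ, sum_expand]
    simp only [pc]
    norm_num
    ring
  have q00 : 0 ≤ Real.negMulLog (pc PXY σ 0 0 0 0) + Real.negMulLog (pc PXY σ 0 1 0 0) + Real.negMulLog (pc PXY σ 1 0 0 0) + Real.negMulLog (pc PXY σ 1 1 0 0) := by
    have o1 : 0 ≤ Real.negMulLog (pc PXY σ 0 0 0 0) := Real.negMulLog_nonneg (by linarith) (by linarith)
    have o2 : 0 ≤ Real.negMulLog (pc PXY σ 0 1 0 0) := Real.negMulLog_nonneg (by linarith) (by linarith)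
    have o3 : 0 ≤ Real.negMulLog (pc PXY σ 1 0 0 0) := Real.negMulLog_nonneg (by linarith) (by linarith)
    have o4 : 0 ≤ Real.negMulLog (pc PXY σ 1 1 0 0) := Real.negMulLog_nonneg (by linarith) (by linarith)
    linarith
  have r00 : Real.negMulLog (pc PXY σ 0 0 0 0) + Real.negMulLog (pc PXY σ 0 1 0 0) + Real.negMulLog (pc PXY σ 1 0 0 0) + Real.negMulLog (pc PXY σ 1 1 0 0) ≤ 4 := by
    have o1 := nml_le_one (x := pc PXY σ 0 0 0 0) (by linarith)
    have o2 := nml_le_one (x := pc PXY σ 0 1 0 0) (by linarith)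
    have o3 := nml_le_one (x := pc PXY σ 1 0 0 0) (by linarith)
    have o4 := nml_le_one (x := pc PXY σ 1 1 0 0) (by linarith)
    linarith
  have q01 : 0 ≤ Real.negMulLog (pc PXY σ 0 0 0 1) + Real.negMulLog (pc PXY σ 0 1 0 1) + Real.negMulLog (pc PXY σ 1 0 0 1) + Real.negMulLog (pc PXY σ 1 1 0 1) := by
    have o1 : 0 ≤ Real.negMulLog (pc PXY σ 0 0 0 1) := Real.negMulLog_nonneg (by linarith) (by linarith)
    have o2 : 0 ≤ Real.negMulLog (pc PXY σ 0 1 0 1) := Real.negMulLog_nonneg (by linarith) (by linarith)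
    have o3 : 0 ≤ Real.negMulLog (pc PXY σ 1 0 0 1) := Real.negMulLog_nonneg (by linarith) (by linarith)
    have o4 : 0 ≤ Real.negMulLog (pc PXY σ 1 1 0 1) := Real.negMulLog_nonneg (by linarith) (by linarith)
    linarith
  have r01 : Real.negMulLog (pc PXY σ 0 0 0 1) + Real.negMulLog (pc PXY σ 0 1 0 1) + Real.negMulLog (pc PXY σ 1 0 0 1) + Real.negMulLog (pc PXY σ 1 1 0 1) ≤ 4 := by
    have o1 := nml_le_one (x := pc PXY σ 0 0 0 1) (by linarith)
    have o2 := nml_le_one (x := pc PXY σ 0 1 0 1) (by linarith)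
    have o3 := nml_le_one (x := pc PXY σ 1 0 0 1) (by linarith)
    have o4 := nml_le_one (x := pc PXY σ 1 1 0 1) (by linarith)
    linarith
  have q10 : 0 ≤ Real.negMulLog (pc PXY σ 0 0 1 0) + Real.negMulLog (pc PXY σ 0 1 1 0) + Real.negMulLog (pc PXY σ 1 0 1 0) + Real.negMulLog (pc PXY σ 1 1 1 0) := by
    have o1 : 0 ≤ Real.negMulLog (pc PXY σ 0 0 1 0) := Real.negMulLog_nonneg (by linarith) (by linarith)
    have o2 : 0 ≤ Real.negMulLog (pc PXY σ 0 1 1 0) := Real.negMulLog_nonneg (by linarith) (by linarith)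
    have o3 : 0 ≤ Real.negMulLog (pc PXY σ 1 0 1 0) := Real.negMulLog_nonneg (by linarith) (by linarith)
    have o4 : 0 ≤ Real.negMulLog (pc PXY σ 1 1 1 0) := Real.negMulLog_nonneg (by linarith) (by linarith)
    linarith
  have r10 : Real.negMulLog (pc PXY σ 0 0 1 0) + Real.negMulLog (pc PXY σ 0 1 1 0) + Real.negMulLog (pc PXY σ 1 0 1 0) + Real.negMulLog (pc PXY σ 1 1 1 0) ≤ 4 := by
    have o1 := nml_le_one (x := pc PXY σ 0 0 1 0) (by linarith)
    have o2 := nml_le_one (x := pc PXY σ 0 1 1 0) (by linarith)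
    have o3 := nml_le_one (x := pc PXY σ 1 0 1 0) (by linarith)
    have o4 := nml_le_one (x := pc PXY σ 1 1 1 0) (by linarith)
    linarith
  have q11 : 0 ≤ Real.negMulLog (pc PXY σ 0 0 1 1) + Real.negMulLog (pc PXY σ 0 1 1 1) + Real.negMulLog (pc PXY σ 1 0 1 1) + Real.negMulLog (pc PXY σ 1 1 1 1) := by
    have o1 : 0 ≤ Real.negMulLog (pc PXY σ 0 0 1 1) := Real.negMulLog_nonneg (by linarith) (by linarith)
    have o2 : 0 ≤ Real.negMulLog (pc PXY σ 0 1 1 1) := Real.negMulLog_nonneg (by linarith) (by linarith)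
    have o3 : 0 ≤ Real.negMulLog (pc PXY σ 1 0 1 1) := Real.negMulLog_nonneg (by linarith) (by linarith)
    have o4 : 0 ≤ Real.negMulLog (pc PXY σ 1 1 1 1) := Real.negMulLog_nonneg (by linarith) (by linarith)
    linarith
  have r11 : Real.negMulLog (pc PXY σ 0 0 1 1) + Real.negMulLog (pc PXY σ 0 1 1 1) + Real.negMulLog (pc PXY σ 1 0 1 1) + Real.negMulLog (pc PXY σ 1 1 1 1) ≤ 4 := by
    have o1 := nml_le_one (x := pc PXY σ 0 0 1 1) (by linarith)
    have o2 := nml_le_one (x := pc PXY σ 0 1 1 1) (by linarith)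
    have o3 := nml_le_one (x := pc PXY σ 1 0 1 1) (by linarith)
    have o4 := nml_le_one (x := pc PXY σ 1 1 1 1) (by linarith)
    linarith
  have habs : |E| ≤ 4 := by
    rw [abs_le]
    constructor <;> (rw [hE]; linarith)
  have hnn : 0 ≤ condEnt PXY σ := by
    rw [hCE]
    apply div_nonneg _ hlog2.le
    have m1 := mul_nonneg (hPXY (0,0)).le q00
    have m2 := mul_nonneg (hPXY (0,1)).le q01
    have m3 := mul_nonneg (hPXY (1,0)).le q10
    have m4 := mul_nonneg (hPXY (1,1)).le q11
    linarith
  refine ⟨hnn, ?_, habs, ?_⟩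
  · rw [hCE, div_le_iff₀ hlog2]
    have m1 := mul_le_mul_of_nonneg_left r00 (hPXY (0,0)).le
    have m2 := mul_le_mul_of_nonneg_left r01 (hPXY (0,1)).le
    have m3 := mul_le_mul_of_nonneg_left r10 (hPXY (1,0)).le
    have m4 := mul_le_mul_of_nonneg_left r11 (hPXY (1,1)).le
    nlinarith
  · rcases le_or_gt E 2 with hE2 | hE2
    · linarith
    ·
      have d00a : E - 2 ≤ 4 * pc PXY σ 0 0 0 0 := by rw [hE]; linarith
      have d00b : E - 2 ≤ 4 * pc PXY σ 1 1 0 0 := by rw [hE]; linarith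
      have d01a : E - 2 ≤ 4 * pc PXY σ 0 0 0 1 := by rw [hE]; linarith
      have d01b : E - 2 ≤ 4 * pc PXY σ 1 1 0 1 := by rw [hE]; linarith
      have d10a : E - 2 ≤ 4 * pc PXY σ 0 0 1 0 := by rw [hE]; linarith
      have d10b : E - 2 ≤ 4 * pc PXY σ 1 1 1 0 := by rw [hE]; linarith
      have d11a : E - 2 ≤ 4 * pc PXY σ 0 1 1 1 := by rw [hE]; linarith
      have d11b : E - 2 ≤ 4 * pc PXY σ 1 0 1 1 := by rw [hE]; linarith
      have hH00 : 2*((E-2)/4)*Real.log 2 ≤ Real.negMulLog (pc PXY σ 0 0 0 0) + Real.negMulLog (pc PXY σ 0 1 0 0) + Real.negMulLog (pc PXY σ 1 0 0 0) + Real.negMulLog (pc PXY σ 1 1 0 0) := by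
        have k := nml_key2 (t := (E-2)/4) (by linarith) (by linarith : (E-2)/4 ≤ pc PXY σ 0 0 0 0) (by linarith : (E-2)/4 ≤ pc PXY σ 1 1 0 0) (by linarith)
        have o1 : 0 ≤ Real.negMulLog (pc PXY σ 0 1 0 0) := Real.negMulLog_nonneg (by linarith) (by linarith)
        have o2 : 0 ≤ Real.negMulLog (pc PXY σ 1 0 0 0) := Real.negMulLog_nonneg (by linarith) (by linarith)
        linarith
      have hH01 : 2*((E-2)/4)*Real.log 2 ≤ Real.negMulLog (pc PXY σ 0 0 0 1) + Real.negMulLog (pc PXY σ 0 1 0 1) + Real.negMulLog (pc PXY σ 1 0 0 1) + Real.negMulLog (pc PXY σ 1 1 0 1) := by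
        have k := nml_key2 (t := (E-2)/4) (by linarith) (by linarith : (E-2)/4 ≤ pc PXY σ 0 0 0 1) (by linarith : (E-2)/4 ≤ pc PXY σ 1 1 0 1) (by linarith)
        have o1 : 0 ≤ Real.negMulLog (pc PXY σ 0 1 0 1) := Real.negMulLog_nonneg (by linarith) (by linarith)
        have o2 : 0 ≤ Real.negMulLog (pc PXY σ 1 0 0 1) := Real.negMulLog_nonneg (by linarith) (by linarith)
        linarith
      have hH10 : 2*((E-2)/4)*Real.log 2 ≤ Real.negMulLog (pc PXY σ 0 0 1 0) + Real.negMulLog (pc PXY σ 0 1 1 0) + Real.negMulLog (pc PXY σ 1 0 1 0) + Real.negMulLog (pc PXY σ 1 1 1 0) := by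
        have k := nml_key2 (t := (E-2)/4) (by linarith) (by linarith : (E-2)/4 ≤ pc PXY σ 0 0 1 0) (by linarith : (E-2)/4 ≤ pc PXY σ 1 1 1 0) (by linarith)
        have o1 : 0 ≤ Real.negMulLog (pc PXY σ 0 1 1 0) := Real.negMulLog_nonneg (by linarith) (by linarith)
        have o2 : 0 ≤ Real.negMulLog (pc PXY σ 1 0 1 0) := Real.negMulLog_nonneg (by linarith) (by linarith)
        linarith
      have hH11 : 2*((E-2)/4)*Real.log 2 ≤ Real.negMulLog (pc PXY σ 0 0 1 1) + Real.negMulLog (pc PXY σ 0 1 1 1) + Real.negMulLog (pc PXY σ 1 0 1 1) + Real.negMulLog (pc PXY σ 1 1 1 1) := by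
        have k := nml_key2 (t := (E-2)/4) (by linarith) (by linarith : (E-2)/4 ≤ pc PXY σ 0 1 1 1) (by linarith : (E-2)/4 ≤ pc PXY σ 1 0 1 1) (by linarith)
        have o1 : 0 ≤ Real.negMulLog (pc PXY σ 0 0 1 1) := Real.negMulLog_nonneg (by linarith) (by linarith)
        have o2 : 0 ≤ Real.negMulLog (pc PXY σ 1 1 1 1) := Real.negMulLog_nonneg (by linarith) (by linarith)
        linarith
      have m1 := mul_le_mul_of_nonneg_left hH00 (hPXY (0,0)).le
      have m2 := mul_le_mul_of_nonneg_left hH01 (hPXY (0,1)).le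
      have m3 := mul_le_mul_of_nonneg_left hH10 (hPXY (1,0)).le
      have m4 := mul_le_mul_of_nonneg_left hH11 (hPXY (1,1)).le
      have hkey : PXY (0,0)*(2*((E-2)/4)*Real.log 2) + PXY (0,1)*(2*((E-2)/4)*Real.log 2)
          + PXY (1,0)*(2*((E-2)/4)*Real.log 2) + PXY (1,1)*(2*((E-2)/4)*Real.log 2)
          = (E-2)/2 * Real.log 2 := by
        linear_combination (2*((E-2)/4)*Real.log 2) * hfour
      rw [hCE, le_div_iff₀ hlog2]
      linarith



lemma fin2 (c : Fin 2) : c = 0 ∨ c = 1 := by omega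

noncomputable def PRbox (PXY : Fin 2 × Fin 2 → ℝ) : Fin 2 × Fin 2 × Fin 2 × Fin 2 → ℝ :=
  fun d => PXY d.2.2 * (if d.1 + d.2.1 = d.2.2.1 * d.2.2.2 then 1/2 else 0)

noncomputable def Det (PXY : Fin 2 × Fin 2 → ℝ) (A B : Fin 2 → Fin 2) :
    Fin 2 × Fin 2 × Fin 2 × Fin 2 → ℝ :=
  fun d => (if d.1 = A d.2.2.1 then (1:ℝ) else 0) *
    (if d.2.1 = B d.2.2.2 then (1:ℝ) else 0) * PXY d.2.2

lemma PR_marg (PXY : Fin 2 × Fin 2 → ℝ) (hPXY : ∀ q, 0 < PXY q) (a x y : Fin 2) :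
    ∑ b : Fin 2, PRbox PXY (a, b, x, y) / PXY (x, y) = 1/2 := by
  have hne : ∀ q : Fin 2 × Fin 2, PXY q ≠ 0 := fun q => (hPXY q).ne'
  fin_cases a <;> fin_cases x <;> fin_cases y <;>
    simp (config := { decide := true }) [PRbox, Fin.sum_univ_two] <;>
    (field_simp [hne]; try ring)

lemma PR_margB (PXY : Fin 2 × Fin 2 → ℝ) (hPXY : ∀ q, 0 < PXY q) (b x y : Fin 2) :
    ∑ a : Fin 2, PRbox PXY (a, b, x, y) / PXY (x, y) = 1/2 := by
  have hne : ∀ q : Fin 2 × Fin 2, PXY q ≠ 0 := fun q => (hPXY q).ne'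
  fin_cases b <;> fin_cases x <;> fin_cases y <;>
    simp (config := { decide := true }) [PRbox, Fin.sum_univ_two] <;>
    (field_simp [hne]; try ring)

lemma PR_mem (PXY : Fin 2 × Fin 2 → ℝ) (hPXY : ∀ q, 0 < PXY q) :
    PRbox PXY ∈ NS PXY := by
  refine ⟨?_, ?_, ?_, ?_⟩
  · intro d
    apply mul_nonneg (hPXY _).le
    split <;> norm_num
  · intro x y
    fin_cases x <;> fin_cases y <;>
      (simp (config := { decide := true }) [PRbox, Fin.sum_univ_two]; try ring)
  · intro a x y y'
    rw [PR_marg PXY hPXY, PR_marg PXY hPXY]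
  · intro b x x' y
    rw [PR_margB PXY hPXY, PR_margB PXY hPXY]

lemma Det_margA (PXY : Fin 2 × Fin 2 → ℝ) (hPXY : ∀ q, 0 < PXY q) (A B : Fin 2 → Fin 2)
    (a x y : Fin 2) :
    ∑ b : Fin 2, Det PXY A B (a, b, x, y) / PXY (x, y) = if a = A x then 1 else 0 := by
  rcases fin2 (B y) with hB | hB <;> by_cases ha : a = A x <;>
    simp [Det, Fin.sum_univ_two, hB, ha, (hPXY (x,y)).ne']

lemma Det_margB (PXY : Fin 2 × Fin 2 → ℝ) (hPXY : ∀ q, 0 < PXY q) (A B : Fin 2 → Fin 2)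
    (b x y : Fin 2) :
    ∑ a : Fin 2, Det PXY A B (a, b, x, y) / PXY (x, y) = if b = B y then 1 else 0 := by
  rcases fin2 (A x) with hA | hA <;> by_cases hb : b = B y <;>
    simp [Det, Fin.sum_univ_two, hA, hb, (hPXY (x,y)).ne']

lemma Det_mem (PXY : Fin 2 × Fin 2 → ℝ) (hPXY : ∀ q, 0 < PXY q) (A B : Fin 2 → Fin 2) :
    Det PXY A B ∈ NS PXY := by
  refine ⟨?_, ?_, ?_, ?_⟩
  · intro d
    apply mul_nonneg (mul_nonneg ?_ ?_) (hPXY _).le <;> (split <;> norm_num)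
  · intro x y
    rcases fin2 (A x) with hA | hA <;> rcases fin2 (B y) with hB | hB <;>
      simp [Det, Fin.sum_univ_two, hA, hB]
  · intro a x y y'
    rw [Det_margA PXY hPXY, Det_margA PXY hPXY]
  · intro b x x' y
    rw [Det_margB PXY hPXY, Det_margB PXY hPXY]

lemma condEnt_Det (PXY : Fin 2 × Fin 2 → ℝ) (hPXY : ∀ q, 0 < PXY q) (A B : Fin 2 → Fin 2) :
    condEnt PXY (Det PXY A B) = 0 := by
  rw [condEnt, neg_eq_zero]
  apply Finset.sum_eq_zero
  intro d _
  by_cases h1 : d.1 = A d.2.2.1 <;> by_cases h2 : d.2.1 = B d.2.2.2 <;>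
    simp [Det, h1, h2, (hPXY _).ne']

lemma condEnt_PR (PXY : Fin 2 × Fin 2 → ℝ) (hPXY : ∀ q, 0 < PXY q)
    (hPXY1 : ∑ q : Fin 2 × Fin 2, PXY q = 1) :
    condEnt PXY (PRbox PXY) = 1 := by
  have hfour : PXY (0,0) + PXY (0,1) + PXY (1,0) + PXY (1,1) = 1 := by
    rw [sum_expand2] at hPXY1; exact hPXY1
  have hhalf : Real.logb 2 ((1:ℝ)/2) = -1 := by
    rw [show (1:ℝ)/2 = 2⁻¹ by norm_num, Real.logb_inv, Real.logb_self_eq_one] <;> norm_num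
  have hterm : ∀ d : Fin 2 × Fin 2 × Fin 2 × Fin 2,
      PRbox PXY d * Real.logb 2 (PRbox PXY d / PXY d.2.2)
      = (if d.1 + d.2.1 = d.2.2.1 * d.2.2.2 then -(PXY d.2.2 / 2) else 0) := by
    intro d
    by_cases h : d.1 + d.2.1 = d.2.2.1 * d.2.2.2
    · simp only [PRbox, h, if_true]
      have hc : PXY d.2.2 * (1/2) / PXY d.2.2 = 1/2 := by
        have hne := (hPXY d.2.2).ne'
        field_simp
      rw [hc, hhalf]; ring
    · simp [PRbox, h]
  rw [condEnt]
  simp only [hterm]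
  rw [sum_expand]
  simp (config := { decide := true }) only []
  norm_num
  have hfour' : PXY 0 + PXY (0,1) + PXY (1,0) + PXY 1 = 1 := hfour
  linarith



lemma NS_le (PXY : Fin 2 × Fin 2 → ℝ) (σ : Fin 2 × Fin 2 × Fin 2 × Fin 2 → ℝ)
    (hσ : σ ∈ NS PXY) : ∀ d, σ d ≤ PXY d.2.2 := by
  obtain ⟨h0, hsum, -, -⟩ := hσ
  rintro ⟨a, b, x, y⟩
  show σ (a, b, x, y) ≤ PXY (x, y)
  have h := hsum x y
  simp only [Fin.sum_univ_two] at h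
  rcases fin2 a with ha | ha <;> rcases fin2 b with hb | hb <;> rw [ha, hb] <;>
    linarith [h0 (0,0,x,y), h0 (0,1,x,y), h0 (1,0,x,y), h0 (1,1,x,y)]

lemma PXY_le_one (PXY : Fin 2 × Fin 2 → ℝ) (hPXY : ∀ q, 0 < PXY q)
    (hPXY1 : ∑ q : Fin 2 × Fin 2, PXY q = 1) : ∀ q, PXY q ≤ 1 := by
  have hfour : PXY (0,0) + PXY (0,1) + PXY (1,0) + PXY (1,1) = 1 := by
    rw [sum_expand2] at hPXY1; exact hPXY1
  rintro ⟨x, y⟩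
  rcases fin2 x with hx | hx <;> rcases fin2 y with hy | hy <;> rw [hx, hy] <;>
    linarith [hPXY (0,0), hPXY (0,1), hPXY (1,0), hPXY (1,1)]


set_option maxHeartbeats 4000000

/-- For any non-signaling distribution `ν` with CHSH expectation
`Ê > 2`, the worst-case conditional entropy
`g₀ = min { Σ_e ω_e H_{σ_e}(AB|XY) }` over convex decompositions
`ν = Σ_e ω_e σ_e` into non-signaling distributions equals `(Ê − 2)/2`. -/
theorem worst_case_conditional_entropy
    (PXY : Fin 2 × Fin 2 → ℝ) (hPXY : ∀ q, 0 < PXY q)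
    (hPXY1 : ∑ q : Fin 2 × Fin 2, PXY q = 1)
    (ν : Fin 2 × Fin 2 × Fin 2 × Fin 2 → ℝ) (hν : ν ∈ NS PXY)
    (Ehat : ℝ) (hE : Ehat = ∑ d, ν d * chsh PXY d) (hE2 : 2 < Ehat) :
    sInf {r : ℝ | ∃ (ω : ℕ → ℝ) (σe : ℕ → Fin 2 × Fin 2 × Fin 2 × Fin 2 → ℝ),
        (∀ e, 0 ≤ ω e) ∧ (∀ e, σe e ∈ NS PXY) ∧ (∑' e, ω e) = 1 ∧
        (∀ d, ∑' e, ω e * σe e d = ν d) ∧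
        r = ∑' e, ω e * condEnt PXY (σe e)} = (Ehat - 2) / 2 := by

  obtain ⟨h0, hsum, hA, hB⟩ := hν
  have hν' : ν ∈ NS PXY := ⟨h0, hsum, hA, hB⟩
  have hp0 : ∀ a b x y : Fin 2, 0 ≤ pc PXY ν a b x y := fun a b x y =>
    div_nonneg (h0 _) (hPXY _).le
  have hps : ∀ x y : Fin 2,
      pc PXY ν 0 0 x y + pc PXY ν 0 1 x y + pc PXY ν 1 0 x y + pc PXY ν 1 1 x y = 1 := by
    intro x y
    have h := hsum x y
    simp only [Fin.sum_univ_two] at h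
    have hP := (hPXY (x,y)).ne'
    simp only [pc]
    field_simp
    linarith
  have hAy : ∀ a x : Fin 2,
      pc PXY ν a 0 x 0 + pc PXY ν a 1 x 0 = pc PXY ν a 0 x 1 + pc PXY ν a 1 x 1 := by
    intro a x
    have h := hA a x 0 1
    simp only [Fin.sum_univ_two] at h
    simp only [pc]
    exact h
  have hBx : ∀ b y : Fin 2,
      pc PXY ν 0 b 0 y + pc PXY ν 1 b 0 y = pc PXY ν 0 b 1 y + pc PXY ν 1 b 1 y := by
    intro b y
    have h := hB b 0 1 y
    simp only [Fin.sum_univ_two] at h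
    simp only [pc]
    exact h
  have n0000 : 0 ≤ pc PXY ν 0 0 0 0 := hp0 0 0 0 0
  have n0001 : 0 ≤ pc PXY ν 0 0 0 1 := hp0 0 0 0 1
  have n0010 : 0 ≤ pc PXY ν 0 0 1 0 := hp0 0 0 1 0
  have n0011 : 0 ≤ pc PXY ν 0 0 1 1 := hp0 0 0 1 1
  have n0100 : 0 ≤ pc PXY ν 0 1 0 0 := hp0 0 1 0 0
  have n0101 : 0 ≤ pc PXY ν 0 1 0 1 := hp0 0 1 0 1
  have n0110 : 0 ≤ pc PXY ν 0 1 1 0 := hp0 0 1 1 0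
  have n0111 : 0 ≤ pc PXY ν 0 1 1 1 := hp0 0 1 1 1
  have n1000 : 0 ≤ pc PXY ν 1 0 0 0 := hp0 1 0 0 0
  have n1001 : 0 ≤ pc PXY ν 1 0 0 1 := hp0 1 0 0 1
  have n1010 : 0 ≤ pc PXY ν 1 0 1 0 := hp0 1 0 1 0
  have n1011 : 0 ≤ pc PXY ν 1 0 1 1 := hp0 1 0 1 1
  have n1100 : 0 ≤ pc PXY ν 1 1 0 0 := hp0 1 1 0 0
  have n1101 : 0 ≤ pc PXY ν 1 1 0 1 := hp0 1 1 0 1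
  have n1110 : 0 ≤ pc PXY ν 1 1 1 0 := hp0 1 1 1 0
  have n1111 : 0 ≤ pc PXY ν 1 1 1 1 := hp0 1 1 1 1
  have s00 := hps 0 0
  have s01 := hps 0 1
  have s10 := hps 1 0
  have s11 := hps 1 1
  have ay00 := hAy 0 0
  have ay01 := hAy 0 1
  have ay10 := hAy 1 0
  have ay11 := hAy 1 1
  have bx00 := hBx 0 0
  have bx01 := hBx 0 1
  have bx10 := hBx 1 0
  have bx11 := hBx 1 1
  have hEpc : Ehat = pc PXY ν 0 0 0 0 + pc PXY ν 0 0 0 1 + pc PXY ν 0 0 1 0 - pc PXY ν 0 0 1 1 - pc PXY ν 0 1 0 0 - pc PXY ν 0 1 0 1 - pc PXY ν 0 1 1 0 + pc PXY ν 0 1 1 1 - pc PXY ν 1 0 0 0 - pc PXY ν 1 0 0 1 - pc PXY ν 1 0 1 0 + pc PXY ν 1 0 1 1 + pc PXY ν 1 1 0 0 + pc PXY ν 1 1 0 1 + pc PXY ν 1 1 1 0 - pc PXY ν 1 1 1 1 := by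
    rw [hE, sum_expand]
    simp only [chsh, pc, Fin.val_zero, Fin.val_one]
    norm_num
    ring
  have hsub : ∀ a b x y : Fin 2, ν (a,b,x,y) = PXY (x,y) * pc PXY ν a b x y := by
    intro a b x y
    have hP := (hPXY (x,y)).ne'
    rw [pc]
    field_simp
  have hid0000 : (Ehat - 2)/2 * (1/2) + pc PXY ν 0 0 1 1 + pc PXY ν 0 1 0 1 + pc PXY ν 1 0 1 0 = pc PXY ν 0 0 0 0 := by linarith [hEpc]
  have hid0001 : (Ehat - 2)/2 * (1/2) + pc PXY ν 0 0 1 1 + pc PXY ν 1 0 1 0 + pc PXY ν 0 1 0 0 = pc PXY ν 0 0 0 1 := by linarith [hEpc]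
  have hid0010 : (Ehat - 2)/2 * (1/2) + pc PXY ν 0 0 1 1 + pc PXY ν 0 1 0 1 + pc PXY ν 1 0 0 0 = pc PXY ν 0 0 1 0 := by linarith [hEpc]
  have hid0011 : pc PXY ν 0 0 1 1 = pc PXY ν 0 0 1 1 := by linarith [hEpc]
  have hid0100 : pc PXY ν 0 1 0 0 = pc PXY ν 0 1 0 0 := by linarith [hEpc]
  have hid0101 : pc PXY ν 0 1 0 1 = pc PXY ν 0 1 0 1 := by linarith [hEpc]
  have hid0110 : pc PXY ν 0 1 1 0 = pc PXY ν 0 1 1 0 := by linarith [hEpc]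
  have hid0111 : (Ehat - 2)/2 * (1/2) + pc PXY ν 0 1 0 1 + pc PXY ν 1 0 0 0 + pc PXY ν 0 1 1 0 = pc PXY ν 0 1 1 1 := by linarith [hEpc]
  have hid1000 : pc PXY ν 1 0 0 0 = pc PXY ν 1 0 0 0 := by linarith [hEpc]
  have hid1001 : pc PXY ν 1 0 0 1 = pc PXY ν 1 0 0 1 := by linarith [hEpc]
  have hid1010 : pc PXY ν 1 0 1 0 = pc PXY ν 1 0 1 0 := by linarith [hEpc]
  have hid1011 : (Ehat - 2)/2 * (1/2) + pc PXY ν 1 0 1 0 + pc PXY ν 0 1 0 0 + pc PXY ν 1 0 0 1 = pc PXY ν 1 0 1 1 := by linarith [hEpc]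
  have hid1100 : (Ehat - 2)/2 * (1/2) + pc PXY ν 0 1 1 0 + pc PXY ν 1 0 0 1 + pc PXY ν 1 1 1 1 = pc PXY ν 1 1 0 0 := by linarith [hEpc]
  have hid1101 : (Ehat - 2)/2 * (1/2) + pc PXY ν 1 0 0 0 + pc PXY ν 0 1 1 0 + pc PXY ν 1 1 1 1 = pc PXY ν 1 1 0 1 := by linarith [hEpc]
  have hid1110 : (Ehat - 2)/2 * (1/2) + pc PXY ν 0 1 0 0 + pc PXY ν 1 0 0 1 + pc PXY ν 1 1 1 1 = pc PXY ν 1 1 1 0 := by linarith [hEpc]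
  have hid1111 : pc PXY ν 1 1 1 1 = pc PXY ν 1 1 1 1 := by linarith [hEpc]
  have hvan1 : ∀ e ∉ Finset.range 9, (if e = 0 then (Ehat - 2)/2 else if e = 1 then pc PXY ν 0 0 1 1 else if e = 2 then pc PXY ν 0 1 0 1 else if e = 3 then pc PXY ν 1 0 1 0 else if e = 4 then pc PXY ν 0 1 0 0 else if e = 5 then pc PXY ν 1 0 0 0 else if e = 6 then pc PXY ν 0 1 1 0 else if e = 7 then pc PXY ν 1 0 0 1 else if e = 8 then pc PXY ν 1 1 1 1 else 0) = 0 := by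
    intro e he
    simp only [Finset.mem_range, not_lt] at he
    split_ifs <;> first | rfl | (exfalso; omega)
  have hvan2 : ∀ (d : Fin 2 × Fin 2 × Fin 2 × Fin 2), ∀ e ∉ Finset.range 9,
      (if e = 0 then (Ehat - 2)/2 else if e = 1 then pc PXY ν 0 0 1 1 else if e = 2 then pc PXY ν 0 1 0 1 else if e = 3 then pc PXY ν 1 0 1 0 else if e = 4 then pc PXY ν 0 1 0 0 else if e = 5 then pc PXY ν 1 0 0 0 else if e = 6 then pc PXY ν 0 1 1 0 else if e = 7 then pc PXY ν 1 0 0 1 else if e = 8 then pc PXY ν 1 1 1 1 else 0) * (if e = 0 then PRbox PXY else if e = 1 then Det PXY ![0,0] ![0,0] else if e = 2 then Det PXY ![0,0] ![0,1] else if e = 3 then Det PXY ![0,1] ![0,0] else if e = 4 then Det PXY ![0,1] ![1,0] else if e = 5 then Det PXY ![1,0] ![0,1] else if e = 6 then Det PXY ![1,0] ![1,1] else if e = 7 then Det PXY ![1,1] ![1,0] else if e = 8 then Det PXY ![1,1] ![1,1] else ν) d = 0 := by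
    intro d e he
    rw [hvan1 e he, zero_mul]
  have hvan3 : ∀ e ∉ Finset.range 9,
      (if e = 0 then (Ehat - 2)/2 else if e = 1 then pc PXY ν 0 0 1 1 else if e = 2 then pc PXY ν 0 1 0 1 else if e = 3 then pc PXY ν 1 0 1 0 else if e = 4 then pc PXY ν 0 1 0 0 else if e = 5 then pc PXY ν 1 0 0 0 else if e = 6 then pc PXY ν 0 1 1 0 else if e = 7 then pc PXY ν 1 0 0 1 else if e = 8 then pc PXY ν 1 1 1 1 else 0) * condEnt PXY (if e = 0 then PRbox PXY else if e = 1 then Det PXY ![0,0] ![0,0] else if e = 2 then Det PXY ![0,0] ![0,1] else if e = 3 then Det PXY ![0,1] ![0,0] else if e = 4 then Det PXY ![0,1] ![1,0] else if e = 5 then Det PXY ![1,0] ![0,1] else if e = 6 then Det PXY ![1,0] ![1,1] else if e = 7 then Det PXY ![1,1] ![1,0] else if e = 8 then Det PXY ![1,1] ![1,1] else ν) = 0 := by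
    intro e he
    rw [hvan1 e he, zero_mul]
  have key : ∀ T : Set ℝ, ((Ehat - 2)/2) ∈ T → (∀ r ∈ T, (Ehat - 2)/2 ≤ r) →
      sInf T = (Ehat - 2)/2 := fun T h1 h2 =>
    le_antisymm (csInf_le ⟨_, fun r hr => h2 r hr⟩ h1) (le_csInf ⟨_, h1⟩ h2)
  apply key
  · -- membership: explicit decomposition
    refine ⟨fun e => if e = 0 then (Ehat - 2)/2 else if e = 1 then pc PXY ν 0 0 1 1 else if e = 2 then pc PXY ν 0 1 0 1 else if e = 3 then pc PXY ν 1 0 1 0 else if e = 4 then pc PXY ν 0 1 0 0 else if e = 5 then pc PXY ν 1 0 0 0 else if e = 6 then pc PXY ν 0 1 1 0 else if e = 7 then pc PXY ν 1 0 0 1 else if e = 8 then pc PXY ν 1 1 1 1 else 0,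
      fun e => if e = 0 then PRbox PXY else if e = 1 then Det PXY ![0,0] ![0,0] else if e = 2 then Det PXY ![0,0] ![0,1] else if e = 3 then Det PXY ![0,1] ![0,0] else if e = 4 then Det PXY ![0,1] ![1,0] else if e = 5 then Det PXY ![1,0] ![0,1] else if e = 6 then Det PXY ![1,0] ![1,1] else if e = 7 then Det PXY ![1,1] ![1,0] else if e = 8 then Det PXY ![1,1] ![1,1] else ν, ?_, ?_, ?_, ?_, ?_⟩
    · intro e
      dsimp only
      split_ifs <;> first | linarith | exact hp0 _ _ _ _ | norm_num
    · intro e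
      dsimp only
      split_ifs <;> first | exact PR_mem PXY hPXY | exact Det_mem PXY hPXY _ _ | exact hν'
    · rw [tsum_eq_sum hvan1]
      simp only [Finset.sum_range_succ, Finset.sum_range_zero]
      norm_num
      linarith [hEpc]
    · intro d
      rw [tsum_eq_sum (hvan2 d)]
      simp only [Finset.sum_range_succ, Finset.sum_range_zero]
      norm_num
      obtain ⟨a, b, x, y⟩ := d
      rcases fin2 a with rfl | rfl <;> rcases fin2 b with rfl | rfl <;>
        rcases fin2 x with rfl | rfl <;> rcases fin2 y with rfl | rfl
      · show _ = ν ((0:Fin 2),(0:Fin 2),(0:Fin 2),(0:Fin 2))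
        simp (config := { decide := true }) only [PRbox, Det, Matrix.cons_val_zero,
          Matrix.cons_val_one, Matrix.head_cons, if_true, if_false]
        norm_num
        linear_combination (PXY ((0:Fin 2),(0:Fin 2))) * hid0000 - hsub 0 0 0 0
      · show _ = ν ((0:Fin 2),(0:Fin 2),(0:Fin 2),(1:Fin 2))
        simp (config := { decide := true }) only [PRbox, Det, Matrix.cons_val_zero,
          Matrix.cons_val_one, Matrix.head_cons, if_true, if_false]
        norm_num
        linear_combination (PXY ((0:Fin 2),(1:Fin 2))) * hid0001 - hsub 0 0 0 1
      · show _ = ν ((0:Fin 2),(0:Fin 2),(1:Fin 2),(0:Fin 2))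
        simp (config := { decide := true }) only [PRbox, Det, Matrix.cons_val_zero,
          Matrix.cons_val_one, Matrix.head_cons, if_true, if_false]
        norm_num
        linear_combination (PXY ((1:Fin 2),(0:Fin 2))) * hid0010 - hsub 0 0 1 0
      · show _ = ν ((0:Fin 2),(0:Fin 2),(1:Fin 2),(1:Fin 2))
        simp (config := { decide := true }) only [PRbox, Det, Matrix.cons_val_zero,
          Matrix.cons_val_one, Matrix.head_cons, if_true, if_false]
        norm_num
        linear_combination (PXY ((1:Fin 2),(1:Fin 2))) * hid0011 - hsub 0 0 1 1
      · show _ = ν ((0:Fin 2),(1:Fin 2),(0:Fin 2),(0:Fin 2))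
        simp (config := { decide := true }) only [PRbox, Det, Matrix.cons_val_zero,
          Matrix.cons_val_one, Matrix.head_cons, if_true, if_false]
        norm_num
        linear_combination (PXY ((0:Fin 2),(0:Fin 2))) * hid0100 - hsub 0 1 0 0
      · show _ = ν ((0:Fin 2),(1:Fin 2),(0:Fin 2),(1:Fin 2))
        simp (config := { decide := true }) only [PRbox, Det, Matrix.cons_val_zero,
          Matrix.cons_val_one, Matrix.head_cons, if_true, if_false]
        norm_num
        linear_combination (PXY ((0:Fin 2),(1:Fin 2))) * hid0101 - hsub 0 1 0 1
      · show _ = ν ((0:Fin 2),(1:Fin 2),(1:Fin 2),(0:Fin 2))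
        simp (config := { decide := true }) only [PRbox, Det, Matrix.cons_val_zero,
          Matrix.cons_val_one, Matrix.head_cons, if_true, if_false]
        norm_num
        linear_combination (PXY ((1:Fin 2),(0:Fin 2))) * hid0110 - hsub 0 1 1 0
      · show _ = ν ((0:Fin 2),(1:Fin 2),(1:Fin 2),(1:Fin 2))
        simp (config := { decide := true }) only [PRbox, Det, Matrix.cons_val_zero,
          Matrix.cons_val_one, Matrix.head_cons, if_true, if_false]
        norm_num
        linear_combination (PXY ((1:Fin 2),(1:Fin 2))) * hid0111 - hsub 0 1 1 1
      · show _ = ν ((1:Fin 2),(0:Fin 2),(0:Fin 2),(0:Fin 2))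
        simp (config := { decide := true }) only [PRbox, Det, Matrix.cons_val_zero,
          Matrix.cons_val_one, Matrix.head_cons, if_true, if_false]
        norm_num
        linear_combination (PXY ((0:Fin 2),(0:Fin 2))) * hid1000 - hsub 1 0 0 0
      · show _ = ν ((1:Fin 2),(0:Fin 2),(0:Fin 2),(1:Fin 2))
        simp (config := { decide := true }) only [PRbox, Det, Matrix.cons_val_zero,
          Matrix.cons_val_one, Matrix.head_cons, if_true, if_false]
        norm_num
        linear_combination (PXY ((0:Fin 2),(1:Fin 2))) * hid1001 - hsub 1 0 0 1
      · show _ = ν ((1:Fin 2),(0:Fin 2),(1:Fin 2),(0:Fin 2))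
        simp (config := { decide := true }) only [PRbox, Det, Matrix.cons_val_zero,
          Matrix.cons_val_one, Matrix.head_cons, if_true, if_false]
        norm_num
        linear_combination (PXY ((1:Fin 2),(0:Fin 2))) * hid1010 - hsub 1 0 1 0
      · show _ = ν ((1:Fin 2),(0:Fin 2),(1:Fin 2),(1:Fin 2))
        simp (config := { decide := true }) only [PRbox, Det, Matrix.cons_val_zero,
          Matrix.cons_val_one, Matrix.head_cons, if_true, if_false]
        norm_num
        linear_combination (PXY ((1:Fin 2),(1:Fin 2))) * hid1011 - hsub 1 0 1 1
      · show _ = ν ((1:Fin 2),(1:Fin 2),(0:Fin 2),(0:Fin 2))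
        simp (config := { decide := true }) only [PRbox, Det, Matrix.cons_val_zero,
          Matrix.cons_val_one, Matrix.head_cons, if_true, if_false]
        norm_num
        linear_combination (PXY ((0:Fin 2),(0:Fin 2))) * hid1100 - hsub 1 1 0 0
      · show _ = ν ((1:Fin 2),(1:Fin 2),(0:Fin 2),(1:Fin 2))
        simp (config := { decide := true }) only [PRbox, Det, Matrix.cons_val_zero,
          Matrix.cons_val_one, Matrix.head_cons, if_true, if_false]
        norm_num
        linear_combination (PXY ((0:Fin 2),(1:Fin 2))) * hid1101 - hsub 1 1 0 1
      · show _ = ν ((1:Fin 2),(1:Fin 2),(1:Fin 2),(0:Fin 2))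
        simp (config := { decide := true }) only [PRbox, Det, Matrix.cons_val_zero,
          Matrix.cons_val_one, Matrix.head_cons, if_true, if_false]
        norm_num
        linear_combination (PXY ((1:Fin 2),(0:Fin 2))) * hid1110 - hsub 1 1 1 0
      · show _ = ν ((1:Fin 2),(1:Fin 2),(1:Fin 2),(1:Fin 2))
        simp (config := { decide := true }) only [PRbox, Det, Matrix.cons_val_zero,
          Matrix.cons_val_one, Matrix.head_cons, if_true, if_false]
        norm_num
        linear_combination (PXY ((1:Fin 2),(1:Fin 2))) * hid1111 - hsub 1 1 1 1
    · rw [tsum_eq_sum hvan3]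
      simp only [Finset.sum_range_succ, Finset.sum_range_zero]
      norm_num
      rw [condEnt_PR PXY hPXY hPXY1, condEnt_Det PXY hPXY, condEnt_Det PXY hPXY,
        condEnt_Det PXY hPXY, condEnt_Det PXY hPXY, condEnt_Det PXY hPXY,
        condEnt_Det PXY hPXY, condEnt_Det PXY hPXY, condEnt_Det PXY hPXY]
      ring
  · -- lower bound
    rintro r ⟨ω, σe, hω, hσe, hω1, hdec, hreq⟩
    have hBnd := fun e => NS_bounds PXY hPXY hPXY1 (σe e) (hσe e)
    have hsummable : Summable ω := by
      by_contra hc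
      rw [tsum_eq_zero_of_not_summable hc] at hω1
      norm_num at hω1
    have habsF : ∀ e, |∑ d, σe e d * chsh PXY d| ≤ 4 := fun e => (hBnd e).2.2.1
    have hsumH : Summable (fun e => ω e * condEnt PXY (σe e)) := by
      apply Summable.of_nonneg_of_le (fun e => mul_nonneg (hω e) (hBnd e).1)
        (fun e => mul_le_mul_of_nonneg_left (hBnd e).2.1 (hω e))
      exact hsummable.mul_right 8
    have hsumF : Summable (fun e => ω e * ∑ d, σe e d * chsh PXY d) := by
      rw [← summable_abs_iff]
      apply Summable.of_nonneg_of_le (fun e => abs_nonneg _) ?_ (hsummable.mul_right 4)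
      intro e
      rw [abs_mul, abs_of_nonneg (hω e)]
      exact mul_le_mul_of_nonneg_left (habsF e) (hω e)
    have hstep1 : ∑' e, (ω e * (∑ d, σe e d * chsh PXY d) / 2 - ω e) ≤ r := by
      rw [hreq]
      apply Summable.tsum_le_tsum _ ((hsumF.div_const 2).sub hsummable) hsumH
      intro e
      have h := mul_le_mul_of_nonneg_left (hBnd e).2.2.2 (hω e)
      linarith
    have hsplit : ∑' e, (ω e * (∑ d, σe e d * chsh PXY d) / 2 - ω e)
        = (∑' e, ω e * ∑ d, σe e d * chsh PXY d)/2 - 1 := by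
      rw [Summable.tsum_sub (hsumF.div_const 2) hsummable, tsum_div_const, hω1]
    have hFd : ∀ d : Fin 2 × Fin 2 × Fin 2 × Fin 2,
        Summable (fun e => ω e * (σe e d * chsh PXY d)) := by
      intro d
      rw [← summable_abs_iff]
      apply Summable.of_nonneg_of_le (fun e => abs_nonneg _) ?_
        (hsummable.mul_right |chsh PXY d|)
      intro e
      rw [abs_mul, abs_of_nonneg (hω e), abs_mul]
      apply mul_le_mul_of_nonneg_left _ (hω e)
      have h1 : |σe e d| ≤ 1 := by
        rw [abs_of_nonneg ((hσe e).1 d)]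
        exact le_trans (NS_le PXY (σe e) (hσe e) d) (PXY_le_one PXY hPXY hPXY1 _)
      calc |σe e d| * |chsh PXY d| ≤ 1 * |chsh PXY d| :=
            mul_le_mul_of_nonneg_right h1 (abs_nonneg _)
        _ = |chsh PXY d| := one_mul _
    have hswap : ∑' e, ω e * ∑ d, σe e d * chsh PXY d = Ehat := by
      have h1 : ∀ e, ω e * ∑ d, σe e d * chsh PXY d
          = ∑ d, ω e * (σe e d * chsh PXY d) := by
        intro e
        rw [Finset.mul_sum]
      rw [tsum_congr h1, Summable.tsum_finsetSum (fun d _ => hFd d), hE]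
      apply Finset.sum_congr rfl
      intro d _
      have h2 : ∀ e, ω e * (σe e d * chsh PXY d) = (ω e * σe e d) * chsh PXY d := by
        intro e; ring
      rw [tsum_congr h2, tsum_mul_right, hdec d]
    rw [hswap] at hsplit
    linarith


end CHSH17
end

section
/- For 2 < Ê < 4, the ratio of the maximum asymptotic randomness rate g₀(Ê) = (Ê−2)/2 to the single-trial conditional min-entropy H_min(Ê) = −log₂((6−Ê)/4) is strictly greater than 1, and its limit as Ê → 2⁺ equals 2·ln 2 ≈ 1.386. -/
/-!
With `t = (Ê - 2) / 2 ∈ (0, 1)` the min-entropy is `-log₂ (1 - t / 2)`, and strict concavity of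
`log` on the chord from `1` to `1 / 2` gives `log (1 - t / 2) > -t log 2`, i.e. the ratio exceeds 1.
With `h = (2 - Ê) / 4 → 0` the ratio equals `2 log 2 / (log (1 + h) / h)`, and
`log (1 + h) / h → log' 1 = 1`.
-/

open Real Filter Set Topology

lemma neg_logb_two_one_sub_half_lt {t : ℝ} (ht₀ : 0 < t) (ht₁ : t < 1) :
    -logb 2 (1 - t / 2) < t := by
  have hconc := strictConcaveOn_log_Ioi.2 (mem_Ioi.2 one_pos) (mem_Ioi.2 one_half_pos)
    (by norm_num) (sub_pos.2 ht₁) ht₀ (sub_add_cancel 1 t)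
  simp only [smul_eq_mul, log_one, mul_zero, zero_add, one_div, log_inv, mul_one] at hconc
  rw [logb, neg_lt, lt_div_iff₀ (log_pos one_lt_two)]
  convert hconc using 1 <;> ring_nf

lemma tendsto_log_one_add_div_self : Tendsto (fun h => log (1 + h) / h) (𝓝[≠] 0) (𝓝 1) := by
  simpa [div_eq_inv_mul] using (hasDerivAt_log one_ne_zero).tendsto_slope_zero

/-- For `2 < Ê < 4`, the ratio of the maximum asymptotic
randomness rate `g₀(Ê) = (Ê−2)/2` to the single-trial conditional min-entropy
`H_min(Ê) = −log₂((6−Ê)/4)` is strictly greater than 1, and its limit as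
`Ê → 2⁺` equals `2 ln 2`. -/
theorem rate_ratio_gt_one_and_limit :
    (∀ Ehat : ℝ, 2 < Ehat → Ehat < 4 →
      1 < ((Ehat - 2) / 2) / (-Real.logb 2 ((6 - Ehat) / 4))) ∧
    Filter.Tendsto
      (fun Ehat : ℝ => ((Ehat - 2) / 2) / (-Real.logb 2 ((6 - Ehat) / 4)))
      (nhdsWithin 2 (Set.Ioi 2)) (nhds (2 * Real.log 2)) := by
  constructor
  · intro E h₂ h₄
    have harg : (6 - E) / 4 = 1 - (E - 2) / 2 / 2 := by ring
    have hpos : 0 < -logb 2 ((6 - E) / 4) :=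
      neg_pos.2 (logb_neg one_lt_two (by linarith) (by linarith))
    rw [one_lt_div hpos, harg]
    exact neg_logb_two_one_sub_half_lt (by linarith) (by linarith)
  · have hshift : Tendsto (fun E : ℝ => (2 - E) / 4) (𝓝[>] 2) (𝓝[≠] 0) := by
      refine tendsto_nhdsWithin_of_tendsto_nhds_of_eventually_within _ ?_ ?_
      · exact ((continuous_const.sub continuous_id).div_const 4).tendsto' 2 0 (by norm_num)
          |>.mono_left nhdsWithin_le_nhds
      · filter_upwards [self_mem_nhdsWithin] with E (hE : 2 < E)
        exact div_ne_zero (by linarith) four_ne_zero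
    have hlim := tendsto_const_nhds (x := 2 * log 2) |>.div
      (tendsto_log_one_add_div_self.comp hshift) one_ne_zero
    rw [div_one] at hlim
    refine hlim.congr fun E => ?_
    simp only [Pi.div_apply, Function.comp_apply, logb]
    rw [show 1 + (2 - E) / 4 = (6 - E) / 4 by ring]
    field_simp
    ring
end
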